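/- Let N ≥ 2, 0 < R₀ < R₁, s ∈ (0, R₁ − R₀), and let a ∈ ℝ^N \ {0} with ⟨a, e₁⟩ > 0. Let σ_a(x) := x − 2(⟨a,x⟩/‖a‖²) a be the reflection in the hyperplane through the origin perpendicular to a. Then: (i) for every x ∈ Ω_s with ⟨a, x⟩ > 0, one has σ_a(x) ∈ Ω_s and ⟨a, σ_a(x)⟩ < 0; and (ii) for every x with ‖x − s e₁‖ = R₀ and ⟨a, x⟩ > 0, one has σ_a(x) ∈ Ω_s. -/
import Mathlib


open MeasureTheory Metric Set Filter
open scoped RealInnerProductSpace ENNReal Topology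

/-- The first Dirichlet eigenvalue of the p-Laplacian on `Ω`, defined variationally as the
infimum of Rayleigh quotients of smooth, not identically zero functions with compact
support contained in `Ω`. -/
noncomputable def lam1 {N : ℕ} (p : ℝ) (Ω : Set (EuclideanSpace ℝ (Fin N))) : ℝ :=
  sInf { r : ℝ | ∃ u : EuclideanSpace ℝ (Fin N) → ℝ,
    ContDiff ℝ (⊤ : ℕ∞) u ∧ u ≠ 0 ∧ HasCompactSupport u ∧ tsupport u ⊆ Ω ∧
    r = (∫ x in Ω, ‖gradient u x‖ ^ p) / (∫ x in Ω, |u x| ^ p) }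

/-- The first standard basis vector `e₁` of `ℝ^N`. -/
noncomputable def e1 (N : ℕ) : EuclideanSpace ℝ (Fin N) :=
  (WithLp.equiv 2 (Fin N → ℝ)).symm (fun i => if (i : ℕ) = 0 then 1 else 0)

/-- The eccentric annulus `Ω_s = B_{R₁}(0) \ closure (B_{R₀}(s e₁))`. -/
noncomputable def Om (N : ℕ) (R₀ R₁ s : ℝ) : Set (EuclideanSpace ℝ (Fin N)) :=
  ball 0 R₁ \ closure (ball (s • e1 N) R₀)

/-- `u` is a first eigenfunction of the p-Laplacian on `Ω` with eigenvalue `lam`: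
C¹ on an open set containing the closure of `Ω`, positive in `Ω`, zero on `∂Ω`, and a weak
solution of `−Δ_p u = lam · u^{p−1}`. -/
def IsFirstEigenfunction {N : ℕ} (p : ℝ) (Ω : Set (EuclideanSpace ℝ (Fin N)))
    (lam : ℝ) (u : EuclideanSpace ℝ (Fin N) → ℝ) : Prop :=
  (∃ V : Set (EuclideanSpace ℝ (Fin N)), IsOpen V ∧ closure Ω ⊆ V ∧ ContDiffOn ℝ 1 u V) ∧
  (∀ x ∈ Ω, 0 < u x) ∧
  (∀ x ∈ frontier Ω, u x = 0) ∧
  (∀ φ : EuclideanSpace ℝ (Fin N) → ℝ, ContDiff ℝ (⊤ : ℕ∞) φ → HasCompactSupport φ →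
    tsupport φ ⊆ Ω →
    ∫ x in Ω, ‖gradient u x‖ ^ (p - 2) * ⟪gradient u x, gradient φ x⟫ =
      lam * ∫ x in Ω, (u x) ^ (p - 1) * φ x)

lemma e1_norm (N : ℕ) (hN : 0 < N) : ‖e1 N‖ = 1 := by
  have : e1 N = EuclideanSpace.single (⟨0, hN⟩ : Fin N) (1:ℝ) := by
    ext j
    simp [e1, EuclideanSpace.single, Pi.single_apply, Fin.ext_iff, eq_comm]
  rw [this, EuclideanSpace.norm_single]; norm_num

lemma norm_refl_sub {N : ℕ} (a x c : EuclideanSpace ℝ (Fin N)) (ha : a ≠ 0) :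
    ‖x - (2 * ⟪a, x⟫ / ‖a‖ ^ 2) • a - c‖ ^ 2
      = ‖x - c‖ ^ 2 + (4 * ⟪a, x⟫ / ‖a‖ ^ 2) * ⟪a, c⟫ := by
  have hna : ‖a‖ ^ 2 ≠ 0 := pow_ne_zero 2 (norm_ne_zero_iff.2 ha)
  have key : x - (2 * ⟪a, x⟫ / ‖a‖ ^ 2) • a - c = (x - c) - (2 * ⟪a, x⟫ / ‖a‖ ^ 2) • a := by
    abel
  rw [key, @norm_sub_sq_real, real_inner_smul_right, norm_smul, Real.norm_eq_abs, mul_pow,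
    sq_abs, inner_sub_left, real_inner_comm x a, real_inner_comm c a]
  field_simp
  ring

lemma inner_refl {N : ℕ} (a x : EuclideanSpace ℝ (Fin N)) (ha : a ≠ 0) :
    ⟪a, x - (2 * ⟪a, x⟫ / ‖a‖ ^ 2) • a⟫ = -⟪a, x⟫ := by
  have hna : ‖a‖ ^ 2 ≠ 0 := pow_ne_zero 2 (norm_ne_zero_iff.2 ha)
  rw [inner_sub_right, real_inner_smul_right, real_inner_self_eq_norm_sq]
  field_simp
  ring

lemma norm_refl {N : ℕ} (a x : EuclideanSpace ℝ (Fin N)) (ha : a ≠ 0) :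
    ‖x - (2 * ⟪a, x⟫ / ‖a‖ ^ 2) • a‖ = ‖x‖ := by
  have h := norm_refl_sub a x 0 ha
  simp only [sub_zero, inner_zero_right, mul_zero, add_zero] at h
  nlinarith [norm_nonneg (x - (2 * ⟪a, x⟫ / ‖a‖ ^ 2) • a), norm_nonneg x]

theorem stmt18 (N : ℕ) (hN : 2 ≤ N) (R₀ R₁ : ℝ) (hR₀ : 0 < R₀) (hR : R₀ < R₁)
    (s : ℝ) (hs : 0 < s) (hs' : s < R₁ - R₀)
    (a : EuclideanSpace ℝ (Fin N)) (ha : a ≠ 0) (hae : 0 < ⟪a, e1 N⟫) :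
    (∀ x ∈ Om N R₀ R₁ s, 0 < ⟪a, x⟫ →
      x - (2 * ⟪a, x⟫ / ‖a‖ ^ 2) • a ∈ Om N R₀ R₁ s ∧
      ⟪a, x - (2 * ⟪a, x⟫ / ‖a‖ ^ 2) • a⟫ < 0) ∧
    (∀ x : EuclideanSpace ℝ (Fin N), ‖x - s • e1 N‖ = R₀ → 0 < ⟪a, x⟫ →
      x - (2 * ⟪a, x⟫ / ‖a‖ ^ 2) • a ∈ Om N R₀ R₁ s) := by
  have hna : (0:ℝ) < ‖a‖ ^ 2 := pow_pos (norm_pos_iff.2 ha) 2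
  set c : EuclideanSpace ℝ (Fin N) := s • e1 N with hc
  have hac : 0 < ⟪a, c⟫ := by
    rw [hc, real_inner_smul_right]; exact mul_pos hs hae
  have hclos : closure (ball c R₀) = closedBall c R₀ := closure_ball c hR₀.ne'
  have hnc : ‖c‖ = s := by
    rw [hc, norm_smul, Real.norm_eq_abs, abs_of_pos hs, e1_norm N (by omega), mul_one]
  have main : ∀ x : EuclideanSpace ℝ (Fin N), 0 < ⟪a, x⟫ → R₀ ≤ ‖x - c‖ →
      R₀ < ‖x - (2 * ⟪a, x⟫ / ‖a‖ ^ 2) • a - c‖ := by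
    intro x hax hxc
    have h := norm_refl_sub a x c ha
    have hpos : 0 < (4 * ⟪a, x⟫ / ‖a‖ ^ 2) * ⟪a, c⟫ := mul_pos (div_pos (by linarith) hna) hac
    nlinarith [norm_nonneg (x - (2 * ⟪a, x⟫ / ‖a‖ ^ 2) • a - c), norm_nonneg (x - c)]
  constructor
  · intro x hx hax
    obtain ⟨hx1, hx2⟩ := hx
    rw [mem_ball_zero_iff] at hx1
    rw [hclos, mem_closedBall, dist_eq_norm] at hx2
    push_neg at hx2
    refine ⟨⟨?_, ?_⟩, ?_⟩
    · rw [mem_ball_zero_iff, norm_refl a x ha]; exact hx1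
    · rw [hclos, mem_closedBall, dist_eq_norm]
      push_neg
      exact main x hax hx2.le
    · rw [inner_refl a x ha]; linarith
  · intro x hxc hax
    constructor
    · rw [mem_ball_zero_iff, norm_refl a x ha]
      calc ‖x‖ = ‖(x - c) + c‖ := by rw [sub_add_cancel]
        _ ≤ ‖x - c‖ + ‖c‖ := norm_add_le _ _
        _ = R₀ + s := by rw [hxc, hnc]
        _ < R₁ := by linarith
    · rw [hclos, mem_closedBall, dist_eq_norm]
      push_neg
      exact main x hax (le_of_eq hxc.symm)
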